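/- arXiv:0709.2529 — 10 statements merged into one kernel-verified Lean document; each statement's English description precedes it below -/
import Mathlib

section
/- Let K ≥ 1 and define a sequence a : ℕ → ℚ by a(m) = 1 for 1 ≤ m ≤ 2K+1 and a(n) = (a(n-1)·a(n-2K) + a(n-K) + a(n-K-1)) / a(n-(2K+1)) for n ≥ 2K+2 (assuming all denominators are nonzero). Then a(2K+i) = 2i - 1 for all 2 ≤ i ≤ K+1. -/
/-! In the range `2K+2 ≤ n ≤ 3K+1` every term of the recurrence except `a (n-1)` has index in the
initial block `[1, 2K+1]`, so the recurrence collapses to `a n = a (n-1) + 2` there. -/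

section InitialBlock

variable {K : ℕ} {a : ℕ → ℚ}

theorem succ_eq_add_two_of_lt (hinit : ∀ m, 1 ≤ m → m ≤ 2*K+1 → a m = 1)
    (hrec : ∀ n, 2*K+2 ≤ n →
      a n = (a (n-1) * a (n-2*K) + a (n-K) + a (n-K-1)) / a (n-(2*K+1)))
    {j : ℕ} (hj : j < K) :
    a (2*K+1+(j+1)) = a (2*K+1+j) + 2 := by
  have h := hrec (2*K+1+(j+1)) (by omega)
  rw [show 2*K+1+(j+1)-1 = 2*K+1+j by omega, show 2*K+1+(j+1)-2*K = j+2 by omega,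
    show 2*K+1+(j+1)-K = K+j+2 by omega, show K+j+2-1 = K+j+1 by omega,
    show 2*K+1+(j+1)-(2*K+1) = j+1 by omega,
    hinit (j+2) (by omega) (by omega), hinit (K+j+2) (by omega) (by omega),
    hinit (K+j+1) (by omega) (by omega), hinit (j+1) (by omega) (by omega)] at h
  rw [h]
  ring

theorem eq_two_mul_add_one_of_le (hinit : ∀ m, 1 ≤ m → m ≤ 2*K+1 → a m = 1)
    (hrec : ∀ n, 2*K+2 ≤ n →
      a n = (a (n-1) * a (n-2*K) + a (n-K) + a (n-K-1)) / a (n-(2*K+1))) :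
    ∀ j, j ≤ K → a (2*K+1+j) = 2*(j:ℚ) + 1
  | 0, _ => by simpa using hinit (2*K+1) (by omega) le_rfl
  | j+1, hj => by
    rw [succ_eq_add_two_of_lt hinit hrec (by omega),
      eq_two_mul_add_one_of_le hinit hrec j (by omega)]
    push_cast
    ring

end InitialBlock

theorem stmt0_general (K : ℕ) (a : ℕ → ℚ)
    (hinit : ∀ m, 1 ≤ m → m ≤ 2*K+1 → a m = 1)
    (hrec : ∀ n, 2*K+2 ≤ n →
      a n = (a (n-1) * a (n-2*K) + a (n-K) + a (n-K-1)) / a (n-(2*K+1))) :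
    ∀ i, 2 ≤ i → i ≤ K+1 → a (2*K+i) = 2*(i:ℚ) - 1 := by
  intro i hi2 hiK
  obtain ⟨j, rfl⟩ : ∃ j, i = j + 1 := ⟨i - 1, by omega⟩
  rw [← add_assoc, add_right_comm, eq_two_mul_add_one_of_le hinit hrec j (by omega)]
  push_cast
  ring

theorem stmt0 (K : ℕ) (hK : 1 ≤ K) (a : ℕ → ℚ)
    (hinit : ∀ m, 1 ≤ m → m ≤ 2*K+1 → a m = 1)
    (hrec : ∀ n, 2*K+2 ≤ n →
      a n = (a (n-1) * a (n-2*K) + a (n-K) + a (n-K-1)) / a (n-(2*K+1))) :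
    ∀ i, 2 ≤ i → i ≤ K+1 → a (2*K+i) = 2*(i:ℚ) - 1 :=
  stmt0_general K a hinit hrec
end

section
/- Let K ≥ 1 and define a : ℕ → ℚ by a(m) = 1 for 1 ≤ m ≤ 2K+1 and a(n) = (a(n-1)·a(n-2K) + a(n-K) + a(n-K-1)) / a(n-(2K+1)) for n ≥ 2K+2. Then a(3K+i) = 1 + 2K - 2i + 2i² for all 2 ≤ i ≤ K+1. -/
/-!
While `a (n-2K-1)` and `a (n-2K)` lie in the initial block of ones, the recurrence reads
`a n = a (n-1) + a (n-K) + a (n-K-1)`. For `n = 2K+1+j`, `1 ≤ j ≤ K`, the last two terms are also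
ones, so `a (2K+1+j) = 2j+1`. For `n = 3K+i`, `2 ≤ i ≤ K+1`, they are `2i-1` and `2i-3`, so the
increments are `4i-4`; summing from `a (3K+1) = 2K+1` gives `1 + 2K - 2i + 2i²`.
-/

namespace QuadraticRecurrence

variable {K : ℕ} {a : ℕ → ℚ}

theorem apply_add_two_mul_add_one
    (hrec : ∀ n, 2*K+2 ≤ n →
      a n = (a (n-1) * a (n-2*K) + a (n-K) + a (n-K-1)) / a (n-(2*K+1)))
    {m : ℕ} (hm : 1 ≤ m) :
    a (m + 2*K + 1) = (a (m + 2*K) * a (m + 1) + a (m + K + 1) + a (m + K)) / a m := by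
  have h := hrec (m + 2*K + 1) (by omega)
  rwa [show m + 2*K + 1 - 1 = m + 2*K by omega, show m + 2*K + 1 - 2*K = m + 1 by omega,
    show m + 2*K + 1 - K = m + K + 1 by omega, show m + K + 1 - 1 = m + K by omega,
    show m + 2*K + 1 - (2*K+1) = m by omega] at h

theorem apply_two_mul_add_one_add
    (hinit : ∀ m, 1 ≤ m → m ≤ 2*K+1 → a m = 1)
    (hrec : ∀ n, 2*K+2 ≤ n →
      a n = (a (n-1) * a (n-2*K) + a (n-K) + a (n-K-1)) / a (n-(2*K+1)))
    {j : ℕ} (hj : j ≤ K) :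
    a (2*K + 1 + j) = 2*(j:ℚ) + 1 := by
  induction j with
  | zero => simpa using hinit (2*K+1) (by omega) le_rfl
  | succ j ih =>
    have h := apply_add_two_mul_add_one hrec (m := j + 1) (by omega)
    rw [hinit (j+1) (by omega) (by omega), hinit (j+1+1) (by omega) (by omega),
      hinit (j+1+K+1) (by omega) (by omega), hinit (j+1+K) (by omega) (by omega),
      show j + 1 + 2*K = 2*K + 1 + j by ring, ih (by omega)] at h
    rw [← add_assoc, h]
    push_cast
    ring

theorem apply_three_mul_add
    (hinit : ∀ m, 1 ≤ m → m ≤ 2*K+1 → a m = 1)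
    (hrec : ∀ n, 2*K+2 ≤ n →
      a n = (a (n-1) * a (n-2*K) + a (n-K) + a (n-K-1)) / a (n-(2*K+1)))
    {i : ℕ} (hi : 1 ≤ i) (hiK : i ≤ K + 1) :
    a (3*K + i) = 1 + 2*(K:ℚ) - 2*(i:ℚ) + 2*(i:ℚ)^2 := by
  induction i, hi using Nat.le_induction with
  | base =>
    rw [show 3*K + 1 = 2*K + 1 + K by ring, apply_two_mul_add_one_add hinit hrec le_rfl]
    ring
  | succ i hi ih =>
    have h := apply_add_two_mul_add_one hrec (m := K + i) (by omega)
    rw [hinit (K+i) (by omega) (by omega), hinit (K+i+1) (by omega) (by omega),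
      show K + i + 2*K = 3*K + i by ring, ih (by omega),
      show K + i + K + 1 = 2*K + 1 + i by ring, apply_two_mul_add_one_add hinit hrec (by omega),
      show K + i + K = 2*K + 1 + (i-1) by omega, apply_two_mul_add_one_add hinit hrec (by omega),
      Nat.cast_sub hi] at h
    rw [← add_assoc, h]
    push_cast
    ring

end QuadraticRecurrence

open QuadraticRecurrence in
theorem stmt1_general (K : ℕ) (a : ℕ → ℚ)
    (hinit : ∀ m, 1 ≤ m → m ≤ 2*K+1 → a m = 1)
    (hrec : ∀ n, 2*K+2 ≤ n →
      a n = (a (n-1) * a (n-2*K) + a (n-K) + a (n-K-1)) / a (n-(2*K+1))) :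
    ∀ i, 2 ≤ i → i ≤ K+1 →
      a (3*K+i) = 1 + 2*(K:ℚ) - 2*(i:ℚ) + 2*(i:ℚ)^2 :=
  fun _ hi hiK => apply_three_mul_add hinit hrec (by omega) hiK

theorem stmt1 (K : ℕ) (hK : 1 ≤ K) (a : ℕ → ℚ)
    (hinit : ∀ m, 1 ≤ m → m ≤ 2*K+1 → a m = 1)
    (hrec : ∀ n, 2*K+2 ≤ n →
      a n = (a (n-1) * a (n-2*K) + a (n-K) + a (n-K-1)) / a (n-(2*K+1))) :
    ∀ i, 2 ≤ i → i ≤ K+1 →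
      a (3*K+i) = 1 + 2*(K:ℚ) - 2*(i:ℚ) + 2*(i:ℚ)^2 :=
  stmt1_general K a hinit hrec
end

section
/- Let K ≥ 1 and define a : ℕ → ℚ by a(m) = 1 for 1 ≤ m ≤ 2K+1 and the recurrence a(n)·a(n-(2K+1)) = a(n-1)·a(n-2K) + a(n-K) + a(n-K-1). Then a(5K+i) = 3 + 10K - 10i + 16K² - 16Ki + 8i² + 4K³ - 4K²i + 16Ki² + 4K²i² for all 2 ≤ i ≤ K+1. -/
/-!
Split the indices into blocks of length `K` (overlapping at their ends): block `j` is
`a (j*K + i)` for `1 ≤ i ≤ K + 1`. At `n = (j+2)*K + i + 1` the recurrence involves only the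
blocks `j`, `j + 1`, `j + 2`, and it determines block `j + 2` from its first entry (the last
entry of block `j + 1`) by a first-order recurrence in `i`. Blocks `0` and `1` are constant `1`;
block by block the entries are then polynomials in `K` and `i`, and block `5` is the claim.
-/

variable {F : Type*} [Field F]

def SatisfiesRecurrence (K : ℕ) (a : ℕ → F) : Prop :=
  ∀ n, 2*K+2 ≤ n → a n * a (n-(2*K+1)) = a (n-1) * a (n-2*K) + a (n-K) + a (n-K-1)

def AgreesOnBlock (K : ℕ) (a : ℕ → F) (j : ℕ) (p : ℕ → F) : Prop :=
  ∀ i, 1 ≤ i → i ≤ K+1 → a (j*K+i) = p i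

namespace SatisfiesRecurrence

variable {K : ℕ} {a : ℕ → F}

theorem apply_offset (h : SatisfiesRecurrence K a) (m i : ℕ) (hi : 1 ≤ i) :
    a (m+2*K+(i+1)) * a (m+i) =
      a (m+2*K+i) * a (m+(i+1)) + a (m+K+(i+1)) + a (m+K+i) := by
  have := h (m+2*K+(i+1)) (by omega)
  rwa [show m+2*K+(i+1)-(2*K+1) = m+i by omega, show m+2*K+(i+1)-1 = m+2*K+i by omega,
    show m+2*K+(i+1)-2*K = m+(i+1) by omega, show m+2*K+(i+1)-K-1 = m+K+i by omega,
    show m+2*K+(i+1)-K = m+K+(i+1) by omega] at this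

theorem agreesOnBlock_add_two (h : SatisfiesRecurrence K a) {j : ℕ} {p q r : ℕ → F}
    (hp : AgreesOnBlock K a j p) (hq : AgreesOnBlock K a (j+1) q)
    (hp_ne : ∀ i, 1 ≤ i → i ≤ K → p i ≠ 0) (hr_one : r 1 = q (K+1))
    (hr_succ : ∀ i, 1 ≤ i → i ≤ K → r (i+1) * p i = r i * p (i+1) + q (i+1) + q i) :
    AgreesOnBlock K a (j+2) r := by
  have hq' : ∀ i, 1 ≤ i → i ≤ K+1 → a (j*K+K+i) = q i := by
    simpa only [AgreesOnBlock, add_mul, one_mul] using hq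
  intro i hi
  induction i, hi using Nat.le_induction with
  | base =>
    intro _
    rw [hr_one, ← hq' (K+1) (by omega) le_rfl]
    congr 1
    ring
  | succ i hi ih =>
    intro hle
    have key := h.apply_offset (j*K) i hi
    rw [show ∀ t, (j+2)*K + t = j*K+2*K+t from fun t => by ring] at ih ⊢
    rw [hp i hi (by omega), hp (i+1) (by omega) hle, hq' i hi (by omega),
      hq' (i+1) (by omega) hle, ih (by omega), ← hr_succ i hi (by omega)] at key
    exact mul_right_cancel₀ (hp_ne i hi (by omega)) key

end SatisfiesRecurrence

theorem stmt3_general (K : ℕ) (a : ℕ → ℚ)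
    (hinit : ∀ m, 1 ≤ m → m ≤ 2*K+1 → a m = 1)
    (hrec : ∀ n, 2*K+2 ≤ n →
      a n * a (n-(2*K+1)) = a (n-1) * a (n-2*K) + a (n-K) + a (n-K-1)) :
    ∀ i, 2 ≤ i → i ≤ K+1 →
      a (5*K+i) = 3 + 10*(K:ℚ) - 10*(i:ℚ) + 16*(K:ℚ)^2 - 16*(K:ℚ)*(i:ℚ)
        + 8*(i:ℚ)^2 + 4*(K:ℚ)^3 - 4*(K:ℚ)^2*(i:ℚ) + 16*(K:ℚ)*(i:ℚ)^2
        + 4*(K:ℚ)^2*(i:ℚ)^2 := by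
  have hrec : SatisfiesRecurrence K a := hrec
  have block0 : AgreesOnBlock K a 0 fun _ => 1 := fun i hi hle => hinit _ (by omega) (by omega)
  have block1 : AgreesOnBlock K a 1 fun _ => 1 := fun i hi hle => hinit _ (by omega) (by omega)
  have block2 : AgreesOnBlock K a 2 fun i => 2*(i:ℚ) - 1 :=
    hrec.agreesOnBlock_add_two block0 block1 (fun _ _ _ => one_ne_zero) (by norm_num)
      (fun i _ _ => by push_cast; ring)
  have block3 : AgreesOnBlock K a 3 fun i => 2*(i:ℚ)^2 - 2*i + 2*K + 1 :=
    hrec.agreesOnBlock_add_two block1 block2 (fun _ _ _ => one_ne_zero) (by push_cast; ring)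
      (fun i _ _ => by push_cast; ring)
  have block4 : AgreesOnBlock K a 4
      fun i => 2*(i:ℚ)^2 + (4*(K:ℚ)^2 + 12*K + 2)*i - (2*(K:ℚ)^2 + 8*K + 3) :=
    hrec.agreesOnBlock_add_two block2 block3
      (fun i hi _ => by
        have : (1:ℚ) ≤ i := by exact_mod_cast hi
        linarith)
      (by push_cast; ring) (fun i _ _ => by push_cast; ring)
  have block5 : AgreesOnBlock K a 5 fun i => 3 + 10*(K:ℚ) - 10*(i:ℚ) + 16*(K:ℚ)^2
      - 16*(K:ℚ)*(i:ℚ) + 8*(i:ℚ)^2 + 4*(K:ℚ)^3 - 4*(K:ℚ)^2*(i:ℚ) + 16*(K:ℚ)*(i:ℚ)^2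
      + 4*(K:ℚ)^2*(i:ℚ)^2 :=
    hrec.agreesOnBlock_add_two block3 block4
      (fun i hi _ => by
        have : (1:ℚ) ≤ i := by exact_mod_cast hi
        nlinarith [K.cast_nonneg (α := ℚ)])
      (by push_cast; ring) (fun i _ _ => by push_cast; ring)
  exact fun i hi hle => block5 i (by omega) hle

theorem stmt3 (K : ℕ) (hK : 1 ≤ K) (a : ℕ → ℚ)
    (hinit : ∀ m, 1 ≤ m → m ≤ 2*K+1 → a m = 1)
    (hrec : ∀ n, 2*K+2 ≤ n →
      a n * a (n-(2*K+1)) = a (n-1) * a (n-2*K) + a (n-K) + a (n-K-1)) :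
    ∀ i, 2 ≤ i → i ≤ K+1 →
      a (5*K+i) = 3 + 10*(K:ℚ) - 10*(i:ℚ) + 16*(K:ℚ)^2 - 16*(K:ℚ)*(i:ℚ)
        + 8*(i:ℚ)^2 + 4*(K:ℚ)^3 - 4*(K:ℚ)^2*(i:ℚ) + 16*(K:ℚ)*(i:ℚ)^2
        + 4*(K:ℚ)^2*(i:ℚ)^2 :=
  stmt3_general K a hinit hrec
end

section
/- Let K ≥ 1 and let b : ℕ → ℤ be the sequence defined by b(n) for 1 ≤ n ≤ 6K+1 given by: b(i)=1 for 1 ≤ i ≤ 2K+1; b(2K+i)=2i-1, b(3K+i)=1+2K-2i+2i², b(4K+i)=-3-8K+2i-2K²+12Ki+2i²+4K²i, b(5K+i)=3+10K-10i+16K²-16Ki+8i²+4K³-4K²i+16Ki²+4K²i² for 2 ≤ i ≤ K+1; and b(n) = (2K²+8K+4)·(b(n-2K) - b(n-4K)) + b(n-6K) for n ≥ 6K+2. Then for all n ≥ 2K+2, b(n)·b(n-(2K+1)) = b(n-1)·b(n-2K) + b(n-K) + b(n-K-1). -/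
/-!
Write `Q(m) = b(m+2K+1) b(m) - b(m+2K) b(m+1) - b(m+K+1) - b(m+K)` for the defect of the quadratic
relation at `n = m + 2K + 1`. For an arbitrary sequence `b`, `Q` satisfies the linear recurrence of
`b` up to a combination of the linear defects of `b` itself, so here `Q` obeys the same recurrence,
and it suffices to check `Q = 0` on the first `6K + 1` indices. There `b` is given block by block by polynomials in
`K` and the position inside the block, and the vanishing of `Q` becomes a polynomial identity.
-/

section Defect

variable {R : Type*} [CommRing R]

def quadDefect (b : ℕ → R) (K m : ℕ) : R :=
  b (m + 2*K + 1) * b m - b (m + 2*K) * b (m + 1) - b (m + K + 1) - b (m + K)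

def linDefect (u : ℕ → R) (K : ℕ) (c : R) (m : ℕ) : R :=
  u (m + 6*K) - c * (u (m + 4*K) - u (m + 2*K)) - u m

theorem linDefect_quadDefect (b : ℕ → R) (K : ℕ) (c : R) (m : ℕ) :
    linDefect (quadDefect b K) K c m =
      b (m + 6*K) * linDefect b K c (m + 2*K + 1) - b (m + 6*K + 1) * linDefect b K c (m + 2*K)
        - linDefect b K c (m + K + 1) - linDefect b K c (m + K)
        + b (m + 2*K + 1) * linDefect b K c m - b (m + 2*K) * linDefect b K c (m + 1) := by
  simp only [linDefect, quadDefect]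
  ring_nf

theorem eq_zero_of_linDefect_eq_zero {u : ℕ → R} {K a : ℕ} {c : R} (hK : 0 < K)
    (hrec : ∀ m, a ≤ m → linDefect u K c m = 0) (hinit : ∀ j, a ≤ j → j < a + 6*K → u j = 0) :
    ∀ j, a ≤ j → u j = 0 := by
  intro j
  induction j using Nat.strong_induction_on with
  | _ j ih =>
    intro hj
    by_cases hlt : j < a + 6*K
    · exact hinit j hj hlt
    obtain ⟨m, rfl⟩ : ∃ m, j = m + 6*K := ⟨j - 6*K, by omega⟩
    have h := hrec m (by omega)
    rw [linDefect, ih (m + 4*K) (by omega) (by omega), ih (m + 2*K) (by omega) (by omega),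
      ih m (by omega) (by omega)] at h
    simpa using h

end Defect

/-- `b (k*K + i) = blockPoly K i k` for `1 ≤ i ≤ K + 1`; consecutive blocks overlap, the entry
`i = K + 1` of block `k` being the entry `i = 1` of block `k + 1`. -/
def blockPoly (K i : ℤ) : ℕ → ℤ
  | 0 => 1
  | 1 => 1
  | 2 => 2*i - 1
  | 3 => 1 + 2*K - 2*i + 2*i^2
  | 4 => -3 - 8*K + 2*i - 2*K^2 + 12*K*i + 2*i^2 + 4*K^2*i
  | 5 => 3 + 10*K - 10*i + 16*K^2 - 16*K*i + 8*i^2 + 4*K^3 - 4*K^2*i + 16*K*i^2 + 4*K^2*i^2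
  | k + 6 => (2*K^2 + 8*K + 4) * (blockPoly K i (k + 4) - blockPoly K i (k + 2)) + blockPoly K i k

theorem blockPoly_succ_one (K : ℤ) : ∀ k, blockPoly K 1 (k + 1) = blockPoly K (K + 1) k
  | 0 | 1 | 2 | 3 | 4 | 5 => by simp only [blockPoly] <;> ring
  | k + 6 => by
    rw [show k + 6 + 1 = (k + 1) + 6 from rfl, blockPoly, blockPoly, blockPoly_succ_one K (k + 4),
      blockPoly_succ_one K (k + 2), blockPoly_succ_one K k]

theorem blockPoly_quad (K i : ℤ) (k : ℕ) (hk : k ≤ 6) :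
    blockPoly K (i + 1) (k + 2) * blockPoly K i k - blockPoly K i (k + 2) * blockPoly K (i + 1) k
      - blockPoly K (i + 1) (k + 1) - blockPoly K i (k + 1) = 0 := by
  interval_cases k <;> simp only [blockPoly] <;> ring

theorem eq_blockPoly {K : ℕ} {b : ℕ → ℤ} (hb : b 1 = 1)
    (hinit : ∀ k < 6, ∀ i, 2 ≤ i → i ≤ K + 1 → b (k*K + i) = blockPoly K i k)
    (hrec : ∀ m, 2 ≤ m → linDefect b K (2*(K:ℤ)^2 + 8*(K:ℤ) + 4) m = 0) :
    ∀ k i, 1 ≤ i → i ≤ K + 1 → b (k*K + i) = blockPoly K i k := by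
  intro k
  induction k using Nat.strong_induction_on with
  | _ k ih =>
    intro i hi1 hiK
    rcases (by omega : i = 1 ∨ 2 ≤ i) with rfl | hi2
    · rcases k with _ | k
      · simpa [blockPoly] using hb
      rw [show (k + 1)*K + 1 = k*K + (K + 1) by ring, ih k (by omega) (K + 1) (by omega) le_rfl,
        Nat.cast_one, blockPoly_succ_one, Nat.cast_succ]
    by_cases hk : k < 6
    · exact hinit k hk i hi2 hiK
    obtain ⟨k, rfl⟩ : ∃ k', k = k' + 6 := ⟨k - 6, by omega⟩
    have h := hrec (k*K + i) (by nlinarith)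
    rw [linDefect, show k*K + i + 6*K = (k + 6)*K + i by ring,
      show k*K + i + 4*K = (k + 4)*K + i by ring, show k*K + i + 2*K = (k + 2)*K + i by ring,
      ih (k + 4) (by omega) i hi1 hiK, ih (k + 2) (by omega) i hi1 hiK,
      ih k (by omega) i hi1 hiK] at h
    rw [blockPoly]
    linear_combination h

theorem quadDefect_eq_zero_of_le {K : ℕ} {b : ℕ → ℤ} (hK : 1 ≤ K)
    (hb : ∀ k i, 1 ≤ i → i ≤ K + 1 → b (k*K + i) = blockPoly K i k)
    (j : ℕ) (hj1 : 1 ≤ j) (hj : j ≤ 6*K + 1) : quadDefect b K j = 0 := by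
  obtain ⟨k, i, hk, hi1, hiK, rfl⟩ : ∃ k i, k ≤ 6 ∧ 1 ≤ i ∧ i ≤ K ∧ j = k*K + i :=
    ⟨(j - 1) / K, (j - 1) % K + 1, Nat.div_le_of_le_mul (by omega), by omega,
      Nat.mod_lt _ (by omega), by have := Nat.div_add_mod (j - 1) K; rw [mul_comm]; omega⟩
  rw [quadDefect, show k*K + i + 2*K + 1 = (k + 2)*K + (i + 1) by ring,
    show k*K + i + 2*K = (k + 2)*K + i by ring, show k*K + i + 1 = k*K + (i + 1) by ring,
    show k*K + i + K + 1 = (k + 1)*K + (i + 1) by ring, show k*K + i + K = (k + 1)*K + i by ring,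
    hb (k + 2) (i + 1) (by omega) (by omega), hb (k + 2) i hi1 (by omega),
    hb k (i + 1) (by omega) (by omega), hb k i hi1 (by omega),
    hb (k + 1) (i + 1) (by omega) (by omega), hb (k + 1) i hi1 (by omega)]
  push_cast
  exact blockPoly_quad _ _ k hk

theorem quadDefect_eq_zero {K : ℕ} {b : ℕ → ℤ} {c : ℤ} (hK : 1 ≤ K)
    (hb : ∀ k i, 1 ≤ i → i ≤ K + 1 → b (k*K + i) = blockPoly K i k)
    (hrec : ∀ m, 2 ≤ m → linDefect b K c m = 0) (j : ℕ) (hj : 1 ≤ j) : quadDefect b K j = 0 := by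
  rcases (by omega : j = 1 ∨ 2 ≤ j) with rfl | hj2
  · exact quadDefect_eq_zero_of_le hK hb 1 le_rfl (by omega)
  refine eq_zero_of_linDefect_eq_zero (c := c) hK (fun m hm => ?_)
    (fun j hj2 hj => quadDefect_eq_zero_of_le hK hb j (by omega) (by omega)) j hj2
  rw [linDefect_quadDefect, hrec m hm, hrec (m + 1) (by omega), hrec (m + K) (by omega),
    hrec (m + K + 1) (by omega), hrec (m + 2*K) (by omega), hrec (m + 2*K + 1) (by omega)]
  ring

theorem stmt4 (K : ℕ) (hK : 1 ≤ K) (b : ℕ → ℤ)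
    (h1 : ∀ i, 1 ≤ i → i ≤ 2*K+1 → b i = 1)
    (h2 : ∀ i, 2 ≤ i → i ≤ K+1 → b (2*K+i) = 2*(i:ℤ) - 1)
    (h3 : ∀ i, 2 ≤ i → i ≤ K+1 → b (3*K+i) = 1 + 2*(K:ℤ) - 2*(i:ℤ) + 2*(i:ℤ)^2)
    (h4 : ∀ i, 2 ≤ i → i ≤ K+1 →
      b (4*K+i) = -3 - 8*(K:ℤ) + 2*(i:ℤ) - 2*(K:ℤ)^2 + 12*(K:ℤ)*(i:ℤ)
        + 2*(i:ℤ)^2 + 4*(K:ℤ)^2*(i:ℤ))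
    (h5 : ∀ i, 2 ≤ i → i ≤ K+1 →
      b (5*K+i) = 3 + 10*(K:ℤ) - 10*(i:ℤ) + 16*(K:ℤ)^2 - 16*(K:ℤ)*(i:ℤ)
        + 8*(i:ℤ)^2 + 4*(K:ℤ)^3 - 4*(K:ℤ)^2*(i:ℤ) + 16*(K:ℤ)*(i:ℤ)^2
        + 4*(K:ℤ)^2*(i:ℤ)^2)
    (hrec : ∀ n, 6*K+2 ≤ n →
      b n = (2*(K:ℤ)^2 + 8*(K:ℤ) + 4) * (b (n-2*K) - b (n-4*K)) + b (n-6*K)) :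
    ∀ n, 2*K+2 ≤ n →
      b n * b (n-(2*K+1)) = b (n-1) * b (n-2*K) + b (n-K) + b (n-K-1) := by
  have hinit : ∀ k < 6, ∀ i, 2 ≤ i → i ≤ K + 1 → b (k*K + i) = blockPoly K i k := by
    intro k hk i hi2 hiK
    interval_cases k <;> simp only [blockPoly, zero_mul, zero_add, one_mul]
    · exact h1 i (by omega) (by omega)
    · exact h1 (K + i) (by omega) (by omega)
    · exact h2 i hi2 hiK
    · exact h3 i hi2 hiK
    · exact h4 i hi2 hiK
    · exact h5 i hi2 hiK
  have hlin : ∀ m, 2 ≤ m → linDefect b K (2*(K:ℤ)^2 + 8*(K:ℤ) + 4) m = 0 := by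
    intro m hm
    have h := hrec (m + 6*K) (by omega)
    rw [show m + 6*K - 2*K = m + 4*K by omega, show m + 6*K - 4*K = m + 2*K by omega,
      Nat.add_sub_cancel] at h
    rw [linDefect, h]
    ring
  intro n hn
  have h := quadDefect_eq_zero hK (eq_blockPoly (h1 1 le_rfl (by omega)) hinit hlin) hlin
    (n - (2*K + 1)) (by omega)
  rw [quadDefect, show n - (2*K + 1) + 2*K + 1 = n by omega,
    show n - (2*K + 1) + 2*K = n - 1 by omega, show n - (2*K + 1) + 1 = n - 2*K by omega,
    show n - (2*K + 1) + K + 1 = n - K by omega, show n - (2*K + 1) + K = n - K - 1 by omega] at h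
  linear_combination h
end

section
/- Let K ≥ 1 and define a : ℕ → ℚ by a(m)=1 for 1 ≤ m ≤ 2K+1 and a(n) = (a(n-1)·a(n-2K) + a(n-K) + a(n-K-1)) / a(n-(2K+1)) for n ≥ 2K+2. Then a(n) is a positive integer for every n ≥ 1 (in particular all denominators a(n-(2K+1)) are nonzero). -/
/-!
Positivity is immediate. With `S n = a n + a (n+1)` and `D p = a (p+K) a (p+5K+1) - a (p+K+1) a (p+5K)`,
the recurrence makes `(D p + S p) / S (p+2K)` independent of `p`; the initial values give the constant
`C = 2K² + 8K + 4`. The defect `R j = a (j+6K) - C a (j+4K) + C a (j+2K) - a j` then satisfies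
`R j = a (j+2K) r` for a fixed `r`, and a second identity among the `R j` gives `r (S (1+2K) + S (1+4K)) = 0`,
so `r = 0` by positivity. Thus `a` satisfies a linear recurrence with integer coefficients, and integrality
follows by strong induction once the terms below index `6K` are handled: up to `4K+2` the divisor is `1`,
up to `5K+1` there are closed forms, and up to `6K` the identity for `D` has leading coefficient `1`.
-/

-- The recurrence at `n = q + 2K + 1`, multiplied out.
def QuadRec (K : ℕ) (a : ℕ → ℚ) : Prop :=
  ∀ q, 1 ≤ q → a q * a (q+2*K+1) = a (q+1) * a (q+2*K) + a (q+K) + a (q+K+1)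

def pairSum (a : ℕ → ℚ) (n : ℕ) : ℚ := a n + a (n+1)

def casoratian (K : ℕ) (a : ℕ → ℚ) (p : ℕ) : ℚ :=
  a (p+K) * a (p+5*K+1) - a (p+K+1) * a (p+5*K)

def defect (K : ℕ) (C : ℚ) (a : ℕ → ℚ) (j : ℕ) : ℚ :=
  a (j+6*K) - C * a (j+4*K) + C * a (j+2*K) - a j

namespace QuadRec

variable {K : ℕ} {a : ℕ → ℚ} {C : ℚ}

theorem pos_of_eq_div (hK : 1 ≤ K) (hinit : ∀ m, 1 ≤ m → m ≤ 2*K+1 → 0 < a m)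
    (hrec : ∀ n, 2*K+2 ≤ n →
      a n = (a (n-1) * a (n-2*K) + a (n-K) + a (n-K-1)) / a (n-(2*K+1)))
    {n : ℕ} (hn : 1 ≤ n) : 0 < a n := by
  induction n using Nat.strong_induction_on with
  | _ n ih =>
  by_cases hn' : n ≤ 2*K+1
  · exact hinit n hn hn'
  rw [hrec n (by omega)]
  have := ih (n-1) (by omega) (by omega)
  have := ih (n-2*K) (by omega) (by omega)
  have := ih (n-K) (by omega) (by omega)
  have := ih (n-K-1) (by omega) (by omega)
  have := ih (n-(2*K+1)) (by omega) (by omega)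
  positivity

theorem of_eq_div (hpos : ∀ n, 1 ≤ n → 0 < a n)
    (hrec : ∀ n, 2*K+2 ≤ n →
      a n = (a (n-1) * a (n-2*K) + a (n-K) + a (n-K-1)) / a (n-(2*K+1))) :
    QuadRec K a := by
  intro q hq
  have hn := hrec (q+2*K+1) (by omega)
  rw [show q+2*K+1-1 = q+2*K by omega, show q+2*K+1-2*K = q+1 by omega,
    show q+2*K+1-K-1 = q+K by omega, show q+2*K+1-K = q+K+1 by omega,
    show q+2*K+1-(2*K+1) = q by omega, eq_div_iff (hpos q hq).ne'] at hn
  linear_combination hn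

theorem pairSum_pos (hpos : ∀ n, 1 ≤ n → 0 < a n) {n : ℕ} (hn : 1 ≤ n) : 0 < pairSum a n :=
  add_pos (hpos n hn) (hpos (n+1) (by omega))

theorem pairSum_det_identity (h : QuadRec K a) (hpos : ∀ n, 1 ≤ n → 0 < a n) {p : ℕ} (hp : 1 ≤ p) :
    a (p+K+1) * (pairSum a (p+2*K) * pairSum a (p+4*K+1) - pairSum a (p+2*K+1) * pairSum a (p+4*K)) =
      a (p+3*K+1) * (pairSum a p * pairSum a (p+2*K+1) - pairSum a (p+1) * pairSum a (p+2*K)) := by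
  have h1 := h p hp
  have h2 := h (p+1) (by omega)
  have h3 := h (p+K) (by omega)
  have h4 := h (p+K+1) (by omega)
  have h5 := h (p+2*K) (by omega)
  have h6 := h (p+2*K+1) (by omega)
  apply mul_left_cancel₀ (hpos (p+2*K+1) (by omega)).ne'
  simp only [pairSum]
  linear_combination (norm := ring_nf)
    (-(a (p+3*K+1) * (a (p+2*K+1) + a (p+2*K+2)))) * h1
    + (-(a (p+3*K+1) * (a (p+2*K) + a (p+2*K+1)))) * h2
    + (-(a (p+2*K+1) + a (p+2*K+2))) * h3
    + (a (p+2*K) + a (p+2*K+1)) * h4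
    + (a (p+K+1) * (a (p+2*K+1) + a (p+2*K+2))) * h5
    + (a (p+K+1) * (a (p+2*K) + a (p+2*K+1))) * h6

theorem conserved_step (h : QuadRec K a) (hpos : ∀ n, 1 ≤ n → 0 < a n) {p : ℕ} (hp : 1 ≤ p) :
    pairSum a (p+2*K) * (casoratian K a (p+1) + pairSum a (p+1)) =
      pairSum a (p+2*K+1) * (casoratian K a p + pairSum a p) := by
  have h1 := h p hp
  have h3 := h (p+K) (by omega)
  have h4 := h (p+K+1) (by omega)
  have h7 := h (p+3*K) (by omega)
  have h8 := h (p+3*K+1) (by omega)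
  have hd := pairSum_det_identity h hpos hp
  apply mul_left_cancel₀ (mul_pos (hpos (p+3*K) (by omega)) (hpos (p+3*K+1) (by omega))).ne'
  simp only [pairSum, casoratian] at hd ⊢
  linear_combination (norm := ring_nf)
    ((a (p+2*K) + a (p+2*K+1)) * a (p+3*K) * a (p+K+1)) * h8
    + ((a (p+2*K) + a (p+2*K+1)) * a (p+3*K) * a (p+5*K+1)) * h4
    - ((a (p+2*K+1) + a (p+2*K+2)) * a (p+3*K+1) * a (p+K)) * h7
    - ((a (p+2*K+1) + a (p+2*K+2)) * a (p+3*K+1) * a (p+5*K)) * h3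
    + ((a (p+2*K) + a (p+2*K+1)) * (a (p+2*K+1) + a (p+2*K+2))) * h7
    - ((a (p+2*K+1) + a (p+2*K+2)) * (a (p+4*K) + a (p+4*K+1))) * h3
    + a (p+3*K) * hd

theorem exists_casoratian_eq (h : QuadRec K a) (hpos : ∀ n, 1 ≤ n → 0 < a n) :
    ∃ C : ℚ, ∀ p, 1 ≤ p → casoratian K a p = C * pairSum a (p+2*K) - pairSum a p := by
  refine ⟨(casoratian K a 1 + pairSum a 1) / pairSum a (1+2*K), fun p hp => ?_⟩
  induction p, hp using Nat.le_induction with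
  | base => field_simp [(pairSum_pos hpos (n := 1+2*K) (by omega)).ne']; ring
  | succ p hp ih =>
    have hS := (pairSum_pos hpos (n := p+2*K) (by omega)).ne'
    apply mul_left_cancel₀ hS
    rw [show p+1+2*K = p+2*K+1 by ring]
    linear_combination conserved_step h hpos hp + pairSum a (p+2*K+1) * ih

theorem defect_succ (h : QuadRec K a)
    (hC : ∀ p, 1 ≤ p → casoratian K a p = C * pairSum a (p+2*K) - pairSum a p)
    {q : ℕ} (hq : 1 ≤ q) : a (q+2*K) * defect K C a (q+1) = a (q+2*K+1) * defect K C a q := by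
  have hc := hC (q+K) (by omega)
  have h5 := h (q+2*K) (by omega)
  have h0 := h q hq
  simp only [defect, casoratian, pairSum] at hc ⊢
  linear_combination (norm := ring_nf) hc - C * h5 + h0

theorem defect_shift (h : QuadRec K a)
    (hC : ∀ p, 1 ≤ p → casoratian K a p = C * pairSum a (p+2*K) - pairSum a p)
    {q : ℕ} (hq : 1 ≤ q) :
    a (q+5*K) * defect K C a (q+K+1) - a (q+5*K+1) * defect K C a (q+K) =
      defect K C a q + defect K C a (q+1) := by
  have hc := hC q hq
  have hA := h (q+5*K) (by omega)
  have hB := h (q+3*K) (by omega)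
  simp only [defect, casoratian, pairSum] at hc ⊢
  linear_combination (norm := ring_nf) hA - C * hB + hc

theorem exists_defect_eq (h : QuadRec K a) (hpos : ∀ n, 1 ≤ n → 0 < a n)
    (hC : ∀ p, 1 ≤ p → casoratian K a p = C * pairSum a (p+2*K) - pairSum a p) :
    ∃ r : ℚ, ∀ j, 1 ≤ j → defect K C a j = a (j+2*K) * r := by
  refine ⟨defect K C a 1 / a (1+2*K), fun j hj => ?_⟩
  induction j, hj using Nat.le_induction with
  | base => field_simp [(hpos (1+2*K) (by omega)).ne']
  | succ j hj ih =>
    apply mul_left_cancel₀ (hpos (j+2*K) (by omega)).ne'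
    rw [defect_succ h hC hj, ih, show j+1+2*K = j+2*K+1 by ring]
    ring

theorem defect_eq_zero (h : QuadRec K a) (hpos : ∀ n, 1 ≤ n → 0 < a n)
    (hC : ∀ p, 1 ≤ p → casoratian K a p = C * pairSum a (p+2*K) - pairSum a p)
    {j : ℕ} (hj : 1 ≤ j) : defect K C a j = 0 := by
  obtain ⟨r, hr⟩ := exists_defect_eq h hpos hC
  have hshift := defect_shift h hC (le_refl 1)
  rw [hr 1 le_rfl, hr 2 (by omega), hr (1+K) (by omega), hr (1+K+1) (by omega)] at hshift
  have h3 := h (1+3*K) (by omega)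
  have hr0 : (pairSum a (1+2*K) + pairSum a (1+4*K)) * r = 0 := by
    simp only [pairSum]
    linear_combination (norm := ring_nf) -hshift - r * h3
  have hsum : 0 < pairSum a (1+2*K) + pairSum a (1+4*K) :=
    add_pos (pairSum_pos hpos (by omega)) (pairSum_pos hpos (by omega))
  rw [hr j hj, (mul_eq_zero.mp hr0).resolve_left hsum.ne', mul_zero]

theorem linear_rec (h : QuadRec K a) (hpos : ∀ n, 1 ≤ n → 0 < a n)
    (hC : ∀ p, 1 ≤ p → casoratian K a p = C * pairSum a (p+2*K) - pairSum a p)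
    {j : ℕ} (hj : 1 ≤ j) : a (j+6*K) = C * a (j+4*K) - C * a (j+2*K) + a j := by
  have := defect_eq_zero h hpos hC hj
  rw [defect] at this
  linear_combination this

theorem value_at_2K_add_one_add (h : QuadRec K a) (hone : ∀ m, 1 ≤ m → m ≤ 2*K+1 → a m = 1)
    {i : ℕ} (hi : i ≤ K) : a (2*K+1+i) = 2*i+1 := by
  induction i with
  | zero => simp [hone (2*K+1) (by omega) le_rfl]
  | succ i ih =>
    have hq := h (i+1) (by omega)
    rw [hone (i+1) (by omega) (by omega), hone (i+1+1) (by omega) (by omega),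
      hone (i+1+K) (by omega) (by omega), hone (i+1+K+1) (by omega) (by omega)] at hq
    push_cast
    linear_combination (norm := ring_nf) hq + ih (by omega)

theorem value_at_3K_add_one_add (h : QuadRec K a) (hone : ∀ m, 1 ≤ m → m ≤ 2*K+1 → a m = 1)
    {t : ℕ} (ht : t ≤ K) : a (3*K+1+t) = 2*K+1+2*t*(t+1) := by
  induction t with
  | zero =>
    rw [show 3*K+1+0 = 2*K+1+K by ring, value_at_2K_add_one_add h hone le_rfl]
    push_cast; ring
  | succ t ih =>
    have hq := h (K+t+1) (by omega)
    rw [hone (K+t+1) (by omega) (by omega), hone (K+t+1+1) (by omega) (by omega)] at hq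
    have hx := value_at_2K_add_one_add h hone (i := t) (by omega)
    have hy := value_at_2K_add_one_add h hone (i := t+1) (by omega)
    push_cast at hy ⊢
    linear_combination (norm := ring_nf) hq + ih (by omega) + hx + hy

theorem value_at_4K_add_two_add (h : QuadRec K a) (hone : ∀ m, 1 ≤ m → m ≤ 2*K+1 → a m = 1)
    {s : ℕ} (hs : s < K) :
    a (4*K+2+s) = ((4*s+6)*K^2 + (12*s+16)*K + 2*s^2 + 10*s + 9 : ℕ) := by
  induction s with
  | zero =>
    have hq := h (2*K+1) (by omega)
    rw [hone (2*K+1) (by omega) le_rfl, value_at_2K_add_one_add h hone (i := 1) hs] at hq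
    have hx := value_at_3K_add_one_add h hone (t := 0) (by omega)
    have hy := value_at_3K_add_one_add h hone (t := 1) hs
    have hmid := value_at_3K_add_one_add h hone (t := K) le_rfl
    push_cast at hx hy ⊢
    linear_combination (norm := ring_nf) hq + 3*hmid + hx + hy
  | succ s ih =>
    have hq := h (2*K+2+s) (by omega)
    have z1 := value_at_2K_add_one_add h hone (i := s+1) (by omega)
    have z2 := value_at_2K_add_one_add h hone (i := s+2) (by omega)
    have hx := value_at_3K_add_one_add h hone (t := s+1) (by omega)
    have hy := value_at_3K_add_one_add h hone (t := s+2) (by omega)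
    push_cast at z1 z2 hx hy ih ⊢
    apply mul_left_cancel₀ (show (2*s+3 : ℚ) ≠ 0 by positivity)
    linear_combination (norm := ring_nf)
      hq - a (2*K+2+s+2*K+1) * z1 + a (2*K+2+s+2*K) * z2 + (2*(s:ℚ)+5)*ih (by omega) + hx + hy

theorem value_at_5K_add_one (h : QuadRec K a) (hone : ∀ m, 1 ≤ m → m ≤ 2*K+1 → a m = 1)
    (hK : 1 ≤ K) : a (5*K+1) = 4*K^3 + 16*K^2 + 10*K + 1 := by
  obtain ⟨k, rfl⟩ : ∃ k, K = k + 1 := ⟨K - 1, by omega⟩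
  have hv := value_at_4K_add_two_add h hone (s := k) (by omega)
  rw [show 4*(k+1)+2+k = 5*(k+1)+1 by ring] at hv
  rw [hv]
  push_cast; ring

theorem value_at_5K_add_two (h : QuadRec K a) (hone : ∀ m, 1 ≤ m → m ≤ 2*K+1 → a m = 1)
    (hK : 1 ≤ K) : a (5*K+2) = 4*K^3 + 24*K^2 + 42*K + 15 := by
  have hq := h (3*K+1) (by omega)
  have z1 := value_at_3K_add_one_add h hone (t := 0) (by omega)
  have z2 := value_at_3K_add_one_add h hone (t := 1) hK
  have hx := value_at_3K_add_one_add h hone (t := K) le_rfl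
  have hy := value_at_4K_add_two_add h hone (s := 0) hK
  push_cast at z1 z2 hy
  apply mul_left_cancel₀ (show (2*K+1 : ℚ) ≠ 0 by positivity)
  linear_combination (norm := ring_nf)
    hq - a (3*K+1+2*K+1) * z1 + a (3*K+1+2*K) * z2 + (2*(K:ℚ)+5) * value_at_5K_add_one h hone hK
      + hx + hy

theorem casoratian_eq (h : QuadRec K a) (hpos : ∀ n, 1 ≤ n → 0 < a n)
    (hone : ∀ m, 1 ≤ m → m ≤ 2*K+1 → a m = 1) (hK : 1 ≤ K) {p : ℕ} (hp : 1 ≤ p) :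
    casoratian K a p = ((2*K^2 + 8*K + 4 : ℕ) : ℚ) * pairSum a (p+2*K) - pairSum a p := by
  obtain ⟨C, hC⟩ := exists_casoratian_eq h hpos
  suffices C = 2*K^2 + 8*K + 4 by rw [hC p hp, this]; push_cast; ring
  have h1 := hC 1 le_rfl
  simp only [casoratian, pairSum] at h1
  rw [show 1+5*K+1 = 5*K+2 by ring, show 1+5*K = 5*K+1 by ring, show 1+2*K+1 = 2*K+1+1 by ring,
    value_at_5K_add_two h hone hK, value_at_5K_add_one h hone hK,
    value_at_2K_add_one_add h hone hK, hone (1+K+1) (by omega) (by omega),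
    hone (1+K) (by omega) (by omega), hone (1+2*K) (by omega) (by omega),
    hone (1+1) (by omega) (by omega), hone 1 le_rfl (by omega)] at h1
  push_cast at h1
  linear_combination -h1 / 4

theorem mem_bot (h : QuadRec K a) (hpos : ∀ n, 1 ≤ n → 0 < a n)
    (hone : ∀ m, 1 ≤ m → m ≤ 2*K+1 → a m = 1) (hK : 1 ≤ K) {n : ℕ} (hn : 1 ≤ n) :
    a n ∈ (⊥ : Subring ℚ) := by
  induction n using Nat.strong_induction_on with
  | _ n ih =>
  have hS : ∀ m, m + 1 < n → 1 ≤ m → pairSum a m ∈ (⊥ : Subring ℚ) := fun m hm h1 =>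
    add_mem (ih m (by omega) h1) (ih (m+1) hm (by omega))
  by_cases h₁ : n ≤ 2*K+1
  · rw [hone n hn h₁]; exact one_mem _
  by_cases h₂ : n ≤ 4*K+2
  · obtain ⟨q, hq, rfl⟩ : ∃ q, 1 ≤ q ∧ n = q+2*K+1 := ⟨n-(2*K+1), by omega, by omega⟩
    have hq' := h q hq
    rw [hone q hq (by omega), one_mul] at hq'
    rw [hq']
    exact add_mem (add_mem (mul_mem (ih _ (by omega) (by omega)) (ih _ (by omega) (by omega)))
      (ih _ (by omega) (by omega))) (ih _ (by omega) (by omega))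
  by_cases h₃ : n ≤ 5*K+1
  · obtain ⟨s, hs, rfl⟩ : ∃ s, s < K ∧ n = 4*K+2+s := ⟨n-(4*K+2), by omega, by omega⟩
    rw [value_at_4K_add_two_add h hone hs]
    exact natCast_mem _ _
  by_cases h₄ : n ≤ 6*K
  · obtain ⟨p, hp, rfl⟩ : ∃ p, 1 ≤ p ∧ n = p+5*K+1 := ⟨n-(5*K+1), by omega, by omega⟩
    have hc := casoratian_eq h hpos hone hK hp
    rw [casoratian, hone (p+K) (by omega) (by omega), one_mul] at hc
    rw [show a (p+5*K+1) = a (p+K+1) * a (p+5*K) + (((2*K^2+8*K+4 : ℕ) : ℚ) *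
      pairSum a (p+2*K) - pairSum a p) by linear_combination hc]
    exact add_mem (mul_mem (ih _ (by omega) (by omega)) (ih _ (by omega) (by omega)))
      (sub_mem (mul_mem (natCast_mem _ _) (hS _ (by omega) (by omega))) (hS _ (by omega) hp))
  obtain ⟨j, hj, rfl⟩ : ∃ j, 1 ≤ j ∧ n = j+6*K := ⟨n-6*K, by omega, by omega⟩
  rw [linear_rec h hpos (fun p hp => casoratian_eq h hpos hone hK hp) hj]
  exact add_mem (sub_mem (mul_mem (natCast_mem _ _) (ih _ (by omega) (by omega)))
    (mul_mem (natCast_mem _ _) (ih _ (by omega) (by omega)))) (ih _ (by omega) hj)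

end QuadRec

theorem stmt5 (K : ℕ) (hK : 1 ≤ K) (a : ℕ → ℚ)
    (hinit : ∀ m, 1 ≤ m → m ≤ 2*K+1 → a m = 1)
    (hrec : ∀ n, 2*K+2 ≤ n →
      a n = (a (n-1) * a (n-2*K) + a (n-K) + a (n-K-1)) / a (n-(2*K+1))) :
    ∀ n, 1 ≤ n → ∃ m : ℤ, 0 < m ∧ a n = (m : ℚ) := by
  intro n hn
  have hpos : ∀ n, 1 ≤ n → 0 < a n :=
    fun n => QuadRec.pos_of_eq_div hK (fun m h₁ h₂ => by rw [hinit m h₁ h₂]; exact one_pos) hrec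
  obtain ⟨m, hm⟩ := Subring.mem_bot.mp
    (QuadRec.mem_bot (QuadRec.of_eq_div hpos hrec) hpos hinit hK hn)
  refine ⟨m, ?_, hm.symm⟩
  exact_mod_cast hm ▸ hpos n hn
end

section
/- Let K ≥ 1 and define a by the quadratic recurrence a(n)·a(n-(2K+1)) = a(n-1)·a(n-2K) + a(n-K) + a(n-K-1) with a(m)=1 for 1 ≤ m ≤ 2K+1. Then a(6K+2) = 12K⁴ + 80K³ + 164K² + 112K + 25. -/
/-!
All terms are positive, since the recurrence writes `a (m + 2K + 1)` as a positive quantity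
divided by `a m`; so the recurrence determines each term from earlier ones. Cut the indices
into blocks `[jK + 1, (j + 1)K + 1]`, consecutive blocks sharing an endpoint. When `m + 2K + 1`
lies in a block, the other five terms of the recurrence lie in that block and the two before
it, so an induction along each block shows that `a` is a polynomial in the index there:
`1` on the first two blocks, then of degree `1, 2, 2, 2` in the index. One more step from the
last block gives `a (6K + 2)`.
-/

structure SomosLike {F : Type*} [Semiring F] (K : ℕ) (a : ℕ → F) : Prop where
  init : ∀ m, 1 ≤ m → m ≤ 2*K+1 → a m = 1
  recurrence : ∀ n, 2*K+2 ≤ n →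
    a n * a (n-(2*K+1)) = a (n-1) * a (n-2*K) + a (n-K) + a (n-K-1)

namespace SomosLike

variable {F : Type*} {K : ℕ} {a : ℕ → F}

theorem rec_add [Semiring F] (h : SomosLike K a) {m : ℕ} (hm : 1 ≤ m) :
    a (m + 2*K + 1) * a m = a (m + 2*K) * a (m + 1) + a (m + K + 1) + a (m + K) := by
  convert h.recurrence (m + 2*K + 1) (by omega) using 4 <;> congr 1 <;> omega

section Ordered

variable [Field F] [LinearOrder F] [IsStrictOrderedRing F]

theorem pos (h : SomosLike K a) (hK : 1 ≤ K) {n : ℕ} (hn : 1 ≤ n) : 0 < a n := by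
  induction n using Nat.strong_induction_on with
  | _ n ih =>
  rcases le_or_gt n (2*K+1) with hle | hgt
  · simp [h.init n hn hle]
  · obtain ⟨m, rfl⟩ : ∃ m, n = m + 2*K + 1 := ⟨n - (2*K+1), by omega⟩
    have hm : 0 < a m := ih m (by omega) (by omega)
    have hrhs : 0 < a (m + 2*K + 1) * a m := by
      rw [h.rec_add (by omega)]
      have := ih (m + 2*K) (by omega) (by omega)
      have := ih (m + 1) (by omega) (by omega)
      have := ih (m + K + 1) (by omega) (by omega)
      have := ih (m + K) (by omega) (by omega)
      positivity
    exact pos_of_mul_pos_left hrhs hm.le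

theorem eq_of_mul_eq (h : SomosLike K a) (hK : 1 ≤ K) {m : ℕ} (hm : 1 ≤ m) {x : F}
    (hx : x * a m = a (m + 2*K) * a (m + 1) + a (m + K + 1) + a (m + K)) :
    a (m + 2*K + 1) = x :=
  mul_right_cancel₀ (h.pos hK hm).ne' ((h.rec_add hm).trans hx.symm)

theorem eq_block2 (h : SomosLike K a) (hK : 1 ≤ K) {n : ℕ} (hlo : 2*K + 1 ≤ n)
    (hhi : n ≤ 3*K + 1) : a n = 2 * n - 4 * K - 1 := by
  induction n, hlo using Nat.le_induction with
  | base => rw [h.init _ (by omega) le_rfl]; push_cast; ring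
  | succ n hlo ih =>
    obtain ⟨m, rfl⟩ : ∃ m, n = m + 2*K := ⟨n - 2*K, by omega⟩
    refine h.eq_of_mul_eq hK (by omega) ?_
    rw [ih (by omega), h.init m (by omega) (by omega), h.init (m + 1) (by omega) (by omega),
      h.init (m + K + 1) (by omega) (by omega), h.init (m + K) (by omega) (by omega)]
    push_cast; ring

theorem eq_block3 (h : SomosLike K a) (hK : 1 ≤ K) {n : ℕ} (hlo : 3*K + 1 ≤ n)
    (hhi : n ≤ 4*K + 1) : a n = 2 * K + 1 + 2 * (n - (3 * K + 1)) * (n - 3 * K) := by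
  induction n, hlo using Nat.le_induction with
  | base => rw [h.eq_block2 hK (by omega) le_rfl]; push_cast; ring
  | succ n hlo ih =>
    obtain ⟨m, rfl⟩ : ∃ m, n = m + 2*K := ⟨n - 2*K, by omega⟩
    refine h.eq_of_mul_eq hK (by omega) ?_
    rw [ih (by omega), h.init m (by omega) (by omega), h.init (m + 1) (by omega) (by omega),
      h.eq_block2 hK (n := m + K + 1) (by omega) (by omega),
      h.eq_block2 hK (n := m + K) (by omega) (by omega)]
    push_cast; ring

theorem eq_block4 (h : SomosLike K a) (hK : 1 ≤ K) {n : ℕ} (hlo : 4*K + 1 ≤ n)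
    (hhi : n ≤ 5*K + 1) :
    a n = 2 * (n - (4 * K + 1)) ^ 2 + (4 * K ^ 2 + 12 * K + 6) * (n - (4 * K + 1))
      + 2 * K ^ 2 + 4 * K + 1 := by
  induction n, hlo using Nat.le_induction with
  | base => rw [h.eq_block3 hK (by omega) le_rfl]; push_cast; ring
  | succ n hlo ih =>
    obtain ⟨m, rfl⟩ : ∃ m, n = m + 2*K := ⟨n - 2*K, by omega⟩
    refine h.eq_of_mul_eq hK (by omega) ?_
    rw [ih (by omega), h.eq_block2 hK (n := m) (by omega) (by omega),
      h.eq_block2 hK (n := m + 1) (by omega) (by omega),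
      h.eq_block3 hK (n := m + K + 1) (by omega) (by omega),
      h.eq_block3 hK (n := m + K) (by omega) (by omega)]
    push_cast; ring

theorem eq_block5 (h : SomosLike K a) (hK : 1 ≤ K) {n : ℕ} (hlo : 5*K + 1 ≤ n)
    (hhi : n ≤ 6*K + 1) :
    a n = (4 * K ^ 2 + 16 * K + 8) * (n - (5 * K + 1)) ^ 2
      + (4 * K ^ 2 + 16 * K + 6) * (n - (5 * K + 1)) + 4 * K ^ 3 + 16 * K ^ 2 + 10 * K + 1 := by
  induction n, hlo using Nat.le_induction with
  | base => rw [h.eq_block4 hK (by omega) le_rfl]; push_cast; ring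
  | succ n hlo ih =>
    obtain ⟨m, rfl⟩ : ∃ m, n = m + 2*K := ⟨n - 2*K, by omega⟩
    refine h.eq_of_mul_eq hK (by omega) ?_
    rw [ih (by omega), h.eq_block3 hK (n := m) (by omega) (by omega),
      h.eq_block3 hK (n := m + 1) (by omega) (by omega),
      h.eq_block4 hK (n := m + K + 1) (by omega) (by omega),
      h.eq_block4 hK (n := m + K) (by omega) (by omega)]
    push_cast; ring

end Ordered
end SomosLike

theorem stmt7 (K : ℕ) (hK : 1 ≤ K) (a : ℕ → ℚ)
    (hinit : ∀ m, 1 ≤ m → m ≤ 2*K+1 → a m = 1)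
    (hrec : ∀ n, 2*K+2 ≤ n →
      a n * a (n-(2*K+1)) = a (n-1) * a (n-2*K) + a (n-K) + a (n-K-1)) :
    a (6*K+2) = 12*(K:ℚ)^4 + 80*(K:ℚ)^3 + 164*(K:ℚ)^2 + 112*(K:ℚ) + 25 := by
  have h : SomosLike K a := ⟨hinit, hrec⟩
  rw [show 6*K + 2 = 4*K + 1 + 2*K + 1 by omega]
  refine h.eq_of_mul_eq hK (by omega) ?_
  rw [h.eq_block4 hK (n := 4*K + 1) le_rfl (by omega),
    h.eq_block4 hK (n := 4*K + 1 + 1) (by omega) (by omega),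
    h.eq_block4 hK (n := 4*K + 1 + K) (by omega) (by omega),
    h.eq_block5 hK (n := 4*K + 1 + K + 1) (by omega) (by omega),
    h.eq_block5 hK (n := 4*K + 1 + 2*K) (by omega) (by omega)]
  push_cast; ring
end

section
/- Define the sequence a : ℕ → ℤ by a(1)=a(2)=a(3)=1 and a(n)·a(n-3) = a(n-1)·a(n-2) + a(n-1) + a(n-2) for n ≥ 4 (i.e., the K=1 case). Then a(4)=3, a(5)=7, a(6)=31, a(7)=85, and more generally a(n) = 14·(a(n-2) - a(n-4)) + a(n-6) for all n ≥ 8. -/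
/-!
The terms are positive, and the recurrence at `n` and `n - 1` shows that
`(a(n) + a(n-2) + 1) / a(n-1)` is invariant under `n ↦ n + 2`; with the initial values it equals
`3` for odd `n` and `5` for even `n`.
Eliminating the terms of the other parity from five consecutive instances of
`a(n) + a(n-2) + 1 = κ(n) a(n-1)` gives the linear recurrence with coefficient `3 · 5 - 1 = 14`.
-/

section Recurrence

variable {R : Type*} [CommRing R] (u : ℕ → R)

theorem six_term_of_first_integral (κ : ℕ → R) (hκ : ∀ n, κ (n + 2) = κ n)
    (h : ∀ n, u (n + 2) + u n + 1 = κ n * u (n + 1)) (n : ℕ) :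
    u (n + 6) = (κ n * κ (n + 1) - 1) * (u (n + 4) - u (n + 2)) + u n := by
  have h2 := h (n + 2)
  have h3 := h (n + 3)
  have h4 := h (n + 4)
  rw [hκ] at h2 h3
  rw [hκ, hκ] at h4
  linear_combination h4 + κ n * h3 - κ n * h (n + 1) - h n

variable {u} (hu : ∀ n, u (n + 3) * u n = u (n + 2) * u (n + 1) + u (n + 2) + u (n + 1))
include hu

theorem pos_of_recurrence [LinearOrder R] [IsStrictOrderedRing R]
    (h0 : 0 < u 0) (h1 : 0 < u 1) (h2 : 0 < u 2) (n : ℕ) : 0 < u n := by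
  suffices ∀ n, 0 < u n ∧ 0 < u (n + 1) ∧ 0 < u (n + 2) from (this n).1
  intro n
  induction n with
  | zero => exact ⟨h0, h1, h2⟩
  | succ n ih =>
    obtain ⟨hn, hn1, hn2⟩ := ih
    refine ⟨hn1, hn2, pos_of_mul_pos_left ?_ hn.le⟩
    rw [hu]
    positivity

theorem first_integral_step [IsDomain R] {c : R} {n : ℕ} (hn : u (n + 1) ≠ 0)
    (h : u (n + 2) + u n + 1 = c * u (n + 1)) :
    u (n + 4) + u (n + 2) + 1 = c * u (n + 3) :=
  mul_right_cancel₀ hn <| by linear_combination hu (n + 1) - hu n + u (n + 3) * h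

theorem first_integral [IsDomain R] (hne : ∀ n, u n ≠ 0) (κ : ℕ → R)
    (hκ : ∀ n, κ (n + 2) = κ n) (h0 : u 2 + u 0 + 1 = κ 0 * u 1)
    (h1 : u 3 + u 1 + 1 = κ 1 * u 2) (n : ℕ) : u (n + 2) + u n + 1 = κ n * u (n + 1) := by
  induction n using Nat.twoStepInduction with
  | zero => exact h0
  | one => exact h1
  | more n ih _ => exact hκ n ▸ first_integral_step hu (hne _) ih

end Recurrence

theorem stmt10 (a : ℕ → ℤ)
    (h1 : a 1 = 1) (h2 : a 2 = 1) (h3 : a 3 = 1)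
    (hrec : ∀ n, 4 ≤ n →
      a n * a (n-3) = a (n-1) * a (n-2) + a (n-1) + a (n-2)) :
    a 4 = 3 ∧ a 5 = 7 ∧ a 6 = 31 ∧ a 7 = 85 ∧
    ∀ n, 8 ≤ n → a n = 14 * (a (n-2) - a (n-4)) + a (n-6) := by
  set u : ℕ → ℤ := fun n => a (n + 1)
  have hu : ∀ n, u (n + 3) * u n = u (n + 2) * u (n + 1) + u (n + 2) + u (n + 1) :=
    fun n => hrec (n + 4) (by omega)
  have hpos := pos_of_recurrence hu (by simp [u, h1]) (by simp [u, h2]) (by simp [u, h3])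
  have u3 : u 3 = 3 := by
    have := hu 0
    simp only [u, h1, h2, h3] at this
    linarith
  set κ : ℕ → ℤ := fun n => if Even n then 3 else 5
  have hκ : ∀ n, κ (n + 2) = κ n := fun n => by simp [κ, Nat.even_add]
  have hκκ : ∀ n, κ n * κ (n + 1) = 15 := fun n => by
    rcases Nat.even_or_odd n with hn | hn <;> simp [κ, hn, Nat.even_add_one]
  have hI := first_integral hu (fun n => (hpos n).ne') κ hκ
    (by simp [u, κ, h1, h2, h3]) (by simp [u, κ, u3, h2, h3])
  have u4 := hI 2
  have u5 := hI 3
  have u6 := hI 4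
  norm_num [κ] at u4 u5 u6
  refine ⟨u3, by linarith, by linarith, by linarith, fun n hn => ?_⟩
  obtain ⟨m, rfl⟩ : ∃ m, n = m + 7 := ⟨n - 7, by omega⟩
  have := six_term_of_first_integral u κ hκ hI m
  norm_num [hκκ] at this
  exact this
end

section
/- Define the sequence a : ℕ → ℚ by a(1)=a(2)=a(3)=1 and a(n) = (a(n-1)·a(n-2) + a(n-1) + a(n-2)) / a(n-3) for n ≥ 4. Then every a(n) is a positive integer. -/
/-!
The nonlinear recurrence is linearised: the integer sequence `b` with `b 0 = 3`, `b 1 = 1` and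
`b (n + 2) = c n * b (n + 1) - b n - 1`, where `c n` is `5` for even `n` and `3` for odd `n`,
satisfies `b (n + 3) * b n = b (n + 2) * b (n + 1) + b (n + 2) + b (n + 1)`, because the defect of
this identity is invariant under the linear recurrence whenever `c` has period two, and it
vanishes at `n = 0`. (The value `b 0 = 3` is the one for which `b 1 = b 2 = b 3 = 1` fits a
linear recurrence with coefficients of period two.) Since `c n ≥ 3`, the sequence `b` is positive
and nondecreasing from `b 1` on, so the divisions in the original recurrence are by nonzero
numbers and `a n = b n` for `n ≥ 1`.
-/

namespace ProductRecurrence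

section Linearisation

variable {R : Type*} [CommRing R] {b c : ℕ → R}

theorem defect_succ (hc : ∀ n, c (n + 2) = c n)
    (hb : ∀ n, b (n + 2) = c n * b (n + 1) - b n - 1) (n : ℕ) :
    b (n + 4) * b (n + 1) - b (n + 3) * b (n + 2) - b (n + 3) - b (n + 2)
      = b (n + 3) * b n - b (n + 2) * b (n + 1) - b (n + 2) - b (n + 1) := by
  linear_combination b (n + 1) * hb (n + 2) - b (n + 3) * hb n + b (n + 1) * b (n + 3) * hc n

theorem mul_eq_of_linear (hc : ∀ n, c (n + 2) = c n)
    (hb : ∀ n, b (n + 2) = c n * b (n + 1) - b n - 1)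
    (h0 : b 3 * b 0 = b 2 * b 1 + b 2 + b 1) (n : ℕ) :
    b (n + 3) * b n = b (n + 2) * b (n + 1) + b (n + 2) + b (n + 1) := by
  induction n with
  | zero => exact h0
  | succ n ih => linear_combination defect_succ hc hb n + ih

end Linearisation

theorem one_le_and_le_succ {R : Type*} [CommRing R] [LinearOrder R] [IsStrictOrderedRing R]
    {b c : ℕ → R} (hc : ∀ n, 3 ≤ c n) (hb : ∀ n, b (n + 2) = c n * b (n + 1) - b n - 1)
    (h0 : 1 ≤ b 0) (h01 : b 0 ≤ b 1) (n : ℕ) : 1 ≤ b n ∧ b n ≤ b (n + 1) := by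
  induction n with
  | zero => exact ⟨h0, h01⟩
  | succ n ih =>
    obtain ⟨hpos, hle⟩ := ih
    have hpos' : 1 ≤ b (n + 1) := hpos.trans hle
    refine ⟨hpos', ?_⟩
    rw [hb n]
    nlinarith [hc n]

theorem eq_of_div_recurrence {K : Type*} [Field K] {a b : ℕ → K}
    (h1 : a 1 = b 1) (h2 : a 2 = b 2) (h3 : a 3 = b 3)
    (ha : ∀ n, 4 ≤ n → a n = (a (n - 1) * a (n - 2) + a (n - 1) + a (n - 2)) / a (n - 3))
    (hb : ∀ n, b (n + 3) * b n = b (n + 2) * b (n + 1) + b (n + 2) + b (n + 1))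
    (hb0 : ∀ n, b (n + 1) ≠ 0) (n : ℕ) : a (n + 1) = b (n + 1) := by
  suffices h : ∀ n, a (n + 1) = b (n + 1) ∧ a (n + 2) = b (n + 2) ∧ a (n + 3) = b (n + 3) from
    (h n).1
  intro n
  induction n with
  | zero => exact ⟨h1, h2, h3⟩
  | succ n ih =>
    obtain ⟨e1, e2, e3⟩ := ih
    refine ⟨e2, e3, ?_⟩
    rw [ha (n + 4) (by omega), show n + 4 - 1 = n + 3 from rfl, show n + 4 - 2 = n + 2 from rfl,
      show n + 4 - 3 = n + 1 from rfl, e1, e2, e3, div_eq_iff (hb0 _)]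
    exact (hb (n + 1)).symm

def coeff (n : ℕ) : ℤ := if Even n then 5 else 3

def seq : ℕ → ℤ
  | 0 => 3
  | 1 => 1
  | n + 2 => coeff n * seq (n + 1) - seq n - 1

theorem coeff_add_two (n : ℕ) : coeff (n + 2) = coeff n := by
  simp [coeff, Nat.even_add]

theorem three_le_coeff (n : ℕ) : 3 ≤ coeff n := by
  unfold coeff; split_ifs <;> norm_num

theorem seq_add_two (n : ℕ) : seq (n + 2) = coeff n * seq (n + 1) - seq n - 1 := rfl

theorem seq_succ_pos (n : ℕ) : 0 < seq (n + 1) :=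
  zero_lt_one.trans_le <|
    (one_le_and_le_succ (b := fun n => seq (n + 1)) (c := fun n => coeff (n + 1))
      (fun n => three_le_coeff _) (fun n => seq_add_two (n + 1)) le_rfl (by decide) n).1

theorem seq_mul (n : ℕ) :
    seq (n + 3) * seq n = seq (n + 2) * seq (n + 1) + seq (n + 2) + seq (n + 1) :=
  mul_eq_of_linear coeff_add_two seq_add_two (by decide) n

end ProductRecurrence

open ProductRecurrence in
theorem stmt11 (a : ℕ → ℚ)
    (h1 : a 1 = 1) (h2 : a 2 = 1) (h3 : a 3 = 1)
    (hrec : ∀ n, 4 ≤ n →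
      a n = (a (n-1) * a (n-2) + a (n-1) + a (n-2)) / a (n-3)) :
    ∀ n, 1 ≤ n → ∃ m : ℤ, 0 < m ∧ a n = (m : ℚ) := by
  have ha : ∀ n, a (n + 1) = (seq (n + 1) : ℚ) :=
    eq_of_div_recurrence (b := fun n => (seq n : ℚ))
      (by simp [h1, seq]) (by simp [h2, seq, coeff]) (by simp [h3, seq, coeff]) hrec
      (fun n => by exact_mod_cast seq_mul n)
      (fun n => by exact_mod_cast (seq_succ_pos n).ne')
  rintro (_ | n) hn
  · omega
  · exact ⟨seq (n + 1), seq_succ_pos n, ha n⟩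
end

section
/- Define D : ℕ → ℚ by D(1)=D(2)=D(3)=D(4)=1 and D(n) = (D(n-1)·D(n-3) + D(n-2)) / D(n-4) for n ≥ 5. Then every D(n) is a positive integer. -/
/-! Along the quadratic recurrence, three consecutive affine relations
`a n * D n + (a (n+1) - a n * a (n+2)) * D (n+1) + a (n+2) * D (n+2) + 1 = 0`
with 3-periodic coefficients `a` force the next one. For the Dana Scott initial values they hold
with the integers `a = 3, 4, 4, 3, 4, 4, …` (from `n = 1`). Subtracting two consecutive relations
gives the linear recurrence `D (n+3) = D n - a (n+2) * D (n+1) + a (n+1) * D (n+2)` with integer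
coefficients, so every term is an integer; positivity is immediate from the quadratic recurrence. -/

theorem Nat.le_induction_three {P : ℕ → Prop} (h1 : P 1) (h2 : P 2) (h3 : P 3)
    (hstep : ∀ n, 1 ≤ n → P n → P (n + 1) → P (n + 2) → P (n + 3)) :
    ∀ n, 1 ≤ n → P n := by
  have key : ∀ k, P (k + 1) ∧ P (k + 2) ∧ P (k + 3) := by
    intro k
    induction k with
    | zero => exact ⟨h1, h2, h3⟩
    | succ k ih => exact ⟨ih.2.1, ih.2.2, hstep (k + 1) (by omega) ih.1 ih.2.1 ih.2.2⟩
  intro n hn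
  obtain ⟨k, rfl⟩ := Nat.exists_eq_add_of_le' hn
  exact (key k).1

section Algebra

variable {K : Type*} [Field K]

def AffineRel (p q r x y z : K) : Prop :=
  p * x + (q - p * r) * y + r * z + 1 = 0

theorem AffineRel.linear_step {p q r x y z w : K} (hp : p ≠ 0)
    (h₁ : AffineRel p q r x y z) (h₂ : AffineRel q r p y z w) :
    w = x - r * y + q * z := by
  unfold AffineRel at h₁ h₂
  exact mul_left_cancel₀ hp (by linear_combination h₂ - h₁)

theorem AffineRel.step {a b c u x y z w v : K} (hb : b ≠ 0) (hx : x ≠ 0)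
    (hB₀ : w * u = z * x + y) (hB₁ : v * x = w * y + z)
    (h₀ : AffineRel a b c u x y) (h₁ : AffineRel b c a x y z) (h₂ : AffineRel c a b y z w) :
    AffineRel a b c z w v := by
  have hw := h₁.linear_step hb h₂
  unfold AffineRel at h₀ h₁ h₂ ⊢
  subst hw
  refine (mul_eq_zero.mp ?_).resolve_left hx
  linear_combination x * h₂ + c * hB₁ - a * hB₀ + (x - a * y + c * z) * h₀ - x * h₁

end Algebra

section Sequence

variable {K : Type*} [Field K] {D : ℕ → K}

theorem affineRel_of_bilinear {a : ℕ → K} (ha₃ : ∀ n, a (n + 3) = a n) (ha : ∀ n, a n ≠ 0)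
    (hD : ∀ n, 1 ≤ n → D n ≠ 0)
    (hB : ∀ n, 1 ≤ n → D (n + 4) * D n = D (n + 3) * D (n + 1) + D (n + 2))
    (h₁ : AffineRel (a 1) (a 2) (a 3) (D 1) (D 2) (D 3))
    (h₂ : AffineRel (a 2) (a 3) (a 4) (D 2) (D 3) (D 4))
    (h₃ : AffineRel (a 3) (a 4) (a 5) (D 3) (D 4) (D 5)) :
    ∀ n, 1 ≤ n → AffineRel (a n) (a (n + 1)) (a (n + 2)) (D n) (D (n + 1)) (D (n + 2)) := by
  refine Nat.le_induction_three h₁ h₂ h₃ fun n hn r₀ r₁ r₂ => ?_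
  have e₃ : a (n + 3) = a n := ha₃ n
  have e₄ : a (n + 4) = a (n + 1) := ha₃ (n + 1)
  have e₅ : a (n + 5) = a (n + 2) := ha₃ (n + 2)
  rw [e₃] at r₁
  rw [e₃, e₄] at r₂
  rw [e₃, e₄, e₅]
  exact r₀.step (ha _) (hD _ (by omega)) (hB n hn) (hB (n + 1) (by omega)) r₁ r₂

theorem linear_rec_of_affineRel {a : ℕ → K} (ha₃ : ∀ n, a (n + 3) = a n) (ha : ∀ n, a n ≠ 0)
    (hrel : ∀ n, 1 ≤ n → AffineRel (a n) (a (n + 1)) (a (n + 2)) (D n) (D (n + 1)) (D (n + 2)))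
    (n : ℕ) (hn : 1 ≤ n) :
    D (n + 3) = D n - a (n + 2) * D (n + 1) + a (n + 1) * D (n + 2) := by
  have h := hrel (n + 1) (by omega)
  rw [show a (n + 1 + 2) = a n from ha₃ n] at h
  exact (hrel n hn).linear_step (ha n) h

theorem exists_intCast_of_linear_rec {a : ℕ → ℤ}
    (hrec : ∀ n, 1 ≤ n → D (n + 3) = D n - a (n + 2) * D (n + 1) + a (n + 1) * D (n + 2))
    (h₁ : ∃ m : ℤ, D 1 = m) (h₂ : ∃ m : ℤ, D 2 = m) (h₃ : ∃ m : ℤ, D 3 = m) :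
    ∀ n, 1 ≤ n → ∃ m : ℤ, D n = m := by
  refine Nat.le_induction_three h₁ h₂ h₃ fun n hn ⟨x, hx⟩ ⟨y, hy⟩ ⟨z, hz⟩ => ?_
  exact ⟨x - a (n + 2) * y + a (n + 1) * z, by rw [hrec n hn, hx, hy, hz]; push_cast; ring⟩

theorem bilinear_of_scott_rec (hD : ∀ n, 1 ≤ n → D n ≠ 0)
    (hrec : ∀ n, 5 ≤ n → D n = (D (n - 1) * D (n - 3) + D (n - 2)) / D (n - 4))
    (n : ℕ) (hn : 1 ≤ n) :
    D (n + 4) * D n = D (n + 3) * D (n + 1) + D (n + 2) := by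
  rw [hrec (n + 4) (by omega)]
  exact div_mul_cancel₀ _ (hD n hn)

end Sequence

theorem pos_of_scott_rec {K : Type*} [Field K] [LinearOrder K] [IsStrictOrderedRing K]
    {D : ℕ → K} (hbase : ∀ n, 1 ≤ n → n ≤ 4 → 0 < D n)
    (hrec : ∀ n, 5 ≤ n → D n = (D (n - 1) * D (n - 3) + D (n - 2)) / D (n - 4)) :
    ∀ n, 1 ≤ n → 0 < D n := by
  intro n
  induction n using Nat.strong_induction_on with
  | _ n ih =>
    intro hn
    rcases le_or_gt n 4 with h | h
    · exact hbase n hn h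
    · rw [hrec n h]
      refine div_pos (add_pos (mul_pos ?_ ?_) ?_) ?_ <;> exact ih _ (by omega) (by omega)

def scottCoeff (n : ℕ) : ℤ := if n % 3 = 1 then 3 else 4

theorem stmt12 (D : ℕ → ℚ)
    (h1 : D 1 = 1) (h2 : D 2 = 1) (h3 : D 3 = 1) (h4 : D 4 = 1)
    (hrec : ∀ n, 5 ≤ n →
      D n = (D (n-1) * D (n-3) + D (n-2)) / D (n-4)) :
    ∀ n, 1 ≤ n → ∃ m : ℤ, 0 < m ∧ D n = (m : ℚ) := by
  have hpos := pos_of_scott_rec (by intro n hn hn'; interval_cases n <;> simp [h1, h2, h3, h4]) hrec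
  have hD (n : ℕ) (hn : 1 ≤ n) : D n ≠ 0 := (hpos n hn).ne'
  have h5 : D 5 = 2 := by rw [hrec 5 le_rfl]; norm_num [h1, h2, h3, h4]
  set a : ℕ → ℚ := fun n => (scottCoeff n : ℚ)
  have ha₃ (n : ℕ) : a (n + 3) = a n := by simp [a, scottCoeff]
  have ha (n : ℕ) : a n ≠ 0 := by simp only [a, scottCoeff]; split_ifs <;> norm_num
  have hrel := affineRel_of_bilinear ha₃ ha hD (bilinear_of_scott_rec hD hrec)
    (by simp [AffineRel, a, scottCoeff, h1, h2, h3]; norm_num)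
    (by simp [AffineRel, a, scottCoeff, h2, h3, h4]; norm_num)
    (by simp [AffineRel, a, scottCoeff, h3, h4, h5]; norm_num)
  have hint := exists_intCast_of_linear_rec (a := scottCoeff)
    (linear_rec_of_affineRel ha₃ ha hrel) ⟨1, by simp [h1]⟩ ⟨1, by simp [h2]⟩ ⟨1, by simp [h3]⟩
  intro n hn
  obtain ⟨m, hm⟩ := hint n hn
  exact ⟨m, by exact_mod_cast hm ▸ hpos n hn, hm⟩
end

section
/- Define a : ℕ → ℚ by a(1)=a(2)=a(3)=1 and a(n) = (a(n-1)·a(n-2) + a(n-1) + a(n-2)) / a(n-3) for n ≥ 4. Then a(n) is odd for every n ≥ 3. -/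
/-!
The terms, shifted to `seq n = a (n + 1)`, satisfy the integer recurrence
`seq (n + 2) = coeff n * seq (n + 1) - seq n - 1`, whose coefficient alternates between `3` and `5`,
so they are odd. That this linear sequence also satisfies the rational recurrence is a Vieta jump:
the form `vietaForm (coeff (n + 1)) (coeff n) (seq n) (seq (n + 1))` is preserved by the linear step and
equals `1` initially, and `vietaForm p q y z = 1` factors `y * z + y + z` as a product of the two
neighbours of `(y, z)`.
-/

section VietaJump

variable {R : Type*} [CommRing R]

def vietaForm (p q y z : R) : R :=
  p * y ^ 2 + q * z ^ 2 + p * y + q * z - p * q * y * z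

theorem vietaForm_jump (p q y z : R) :
    vietaForm q p z (q * z - y - 1) = vietaForm p q y z := by
  unfold vietaForm
  ring

theorem mul_jump_eq_of_vietaForm_eq_one {p q y z : R} (h : vietaForm p q y z = 1) :
    (p * y - z - 1) * (q * z - y - 1) = y * z + y + z := by
  unfold vietaForm at h
  linear_combination -h

end VietaJump

namespace QuadraticRecurrence

def coeff (n : ℕ) : ℤ := if Even n then 3 else 5

def seq : ℕ → ℤ
  | 0 => 1
  | 1 => 1
  | n + 2 => coeff n * seq (n + 1) - seq n - 1

theorem coeff_add_two (n : ℕ) : coeff (n + 2) = coeff n := by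
  simp [coeff, Nat.even_add]

theorem odd_coeff (n : ℕ) : Odd (coeff n) := by
  unfold coeff
  split <;> decide

theorem odd_seq : ∀ n, Odd (seq n)
  | 0 => odd_one
  | 1 => odd_one
  | n + 2 => (((odd_coeff n).mul (odd_seq (n + 1))).sub_odd (odd_seq n)).sub_odd odd_one

theorem vietaForm_seq : ∀ n, vietaForm (coeff (n + 1)) (coeff n) (seq n) (seq (n + 1)) = 1
  | 0 => by decide
  | n + 1 => by
    rw [coeff_add_two, seq, vietaForm_jump, vietaForm_seq n]

theorem seq_add_three_mul (n : ℕ) :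
    seq (n + 3) * seq n = seq (n + 2) * seq (n + 1) + seq (n + 2) + seq (n + 1) := by
  -- the two factors on the left of `h` are `seq n` and `seq (n + 3)`
  have h := mul_jump_eq_of_vietaForm_eq_one (vietaForm_seq (n + 1))
  rw [coeff_add_two] at h
  have hnext : seq (n + 3) = coeff (n + 1) * seq (n + 2) - seq (n + 1) - 1 := rfl
  have hprev : seq (n + 2) = coeff n * seq (n + 1) - seq n - 1 := rfl
  rw [hnext]
  linear_combination h + (coeff (n + 1) * seq (n + 2) - seq (n + 1) - 1) * hprev

theorem eq_seq_of_recurrence (a : ℕ → ℚ)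
    (h1 : a 1 = 1) (h2 : a 2 = 1) (h3 : a 3 = 1)
    (hrec : ∀ n, 4 ≤ n → a n = (a (n - 1) * a (n - 2) + a (n - 1) + a (n - 2)) / a (n - 3)) :
    ∀ n, a (n + 1) = seq n
  | 0 => by simp [h1, seq]
  | 1 => by simp [h2, seq]
  | 2 => by simp [h3, seq, coeff]
  | n + 3 => by
    have hn : (seq n : ℚ) ≠ 0 :=
      Int.cast_ne_zero.mpr fun h => Int.not_odd_zero (h ▸ odd_seq n)
    have e0 : a (n + 1) = seq n := eq_seq_of_recurrence a h1 h2 h3 hrec n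
    have e1 : a (n + 2) = seq (n + 1) := eq_seq_of_recurrence a h1 h2 h3 hrec (n + 1)
    have e2 : a (n + 3) = seq (n + 2) := eq_seq_of_recurrence a h1 h2 h3 hrec (n + 2)
    have step := hrec (n + 4) (by omega)
    simp only [show n + 4 - 1 = n + 3 by omega, show n + 4 - 2 = n + 2 by omega,
      show n + 4 - 3 = n + 1 by omega, e0, e1, e2] at step
    rw [step, div_eq_iff hn]
    exact_mod_cast (seq_add_three_mul n).symm

end QuadraticRecurrence

open QuadraticRecurrence in
theorem stmt16 (a : ℕ → ℚ)
    (h1 : a 1 = 1) (h2 : a 2 = 1) (h3 : a 3 = 1)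
    (hrec : ∀ n, 4 ≤ n →
      a n = (a (n-1) * a (n-2) + a (n-1) + a (n-2)) / a (n-3)) :
    ∀ n, 3 ≤ n → ∃ m : ℤ, Odd m ∧ a n = (m : ℚ) := by
  intro n hn
  obtain ⟨k, rfl⟩ : ∃ k, n = k + 1 := ⟨n - 1, by omega⟩
  exact ⟨seq k, odd_seq k, eq_seq_of_recurrence a h1 h2 h3 hrec k⟩
end
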